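/- Let K be a commutative field with exactly 3 elements. Define f(p₀,p₁,p₂,p₃) = p₀p₁p₂ − p₁³ − p₀²p₃ and f₃(p₀,p₁,p₂,p₃) = 2p₀p₁p₂ + 2p₁³ + 2p₀²p₁ + p₀²p₃. Then for every p ∈ K⁴ one has f(p) = 0 if and only if f₃(p) = 0; i.e., the Cayley surface F = V(f) coincides, as a set of points of ℙ₃(K), with V(f₃), although f₃ is not a scalar multiple of f. -/
import Mathlib


/-- The cubic form defining the Cayley surface. -/
def cayleyF {K : Type*} [Field K] (p : Fin 4 → K) : K :=
  p 0 * p 1 * p 2 - (p 1)^3 - (p 0)^2 * p 3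

/-- The alternative cubic form `f₃` for `|K| = 3`. -/
def cayleyF₃ {K : Type*} [Field K] (p : Fin 4 → K) : K :=
  2 * (p 0 * p 1 * p 2) + 2 * (p 1)^3 + 2 * ((p 0)^2 * p 1) + (p 0)^2 * p 3

theorem stmt_7 {K : Type*} [Field K] (hK : Nat.card K = 3) :
    (∀ p : Fin 4 → K, cayleyF p = 0 ↔ cayleyF₃ p = 0) ∧
    ¬ (∃ lam : K, ∀ p : Fin 4 → K, cayleyF₃ p = lam * cayleyF p) := by
  have hfin : Finite K := Nat.finite_of_card_ne_zero (by omega)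
  have : Fintype K := Fintype.ofFinite K
  have hcard : Fintype.card K = 3 := by
    rw [← Nat.card_eq_fintype_card, hK]
  have h3 : (3 : K) = 0 := by
    have := FiniteField.cast_card_eq_zero K
    rwa [hcard] at this
  have hcube : ∀ x : K, x ^ 3 = x := by
    intro x
    have := FiniteField.pow_card x
    rwa [hcard] at this
  have hsq : ∀ x : K, x ≠ 0 → x ^ 2 = 1 := by
    intro x hx
    have h := hcube x
    have : x * (x ^ 2 - 1) = 0 := by ring_nf; linear_combination h
    rcases mul_eq_zero.mp this with h' | h'
    · exact absurd h' hx
    · linear_combination h'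
  constructor
  · intro p
    by_cases h0 : p 0 = 0
    · have : cayleyF₃ p = cayleyF p := by
        unfold cayleyF cayleyF₃
        rw [h0]
        linear_combination (p 1) ^ 3 * h3
      rw [this]
    · have hs := hsq (p 0) h0
      have hb := hcube (p 1)
      have : cayleyF₃ p = - cayleyF p := by
        unfold cayleyF cayleyF₃
        linear_combination (p 0 * p 1 * p 2 + p 1) * h3 + 2 * p 1 * hs + hb
      rw [this, neg_eq_zero]
  · rintro ⟨lam, h⟩
    have h1 := h ![0, 1, 0, 0]
    have h2 := h ![1, 1, 1, 1]
    simp [cayleyF, cayleyF₃] at h1 h2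
    -- h1 : 2 = lam * (-1), h2 : 7 = lam * (-1)
    have : (1 : K) = 0 := by linear_combination h1 - h2 + 2 * h3
    exact one_ne_zero this
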